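/- The first positive zero of the derivative of the Bessel function J_{3/2} coincides with the first positive root of S(z) = −cot z − (2/3)z + 1/z, and satisfies j'_{3/2,1} < 5π/6 < 2√2. -/

import Mathlib

open Real

noncomputable def besselJ (ν x : ℝ) : ℝ :=
  ∑' n : ℕ, ((-1)^n / (n.factorial * Real.Gamma (ν + n + 1))) *
    (x / 2) ^ (2 * n) * (x / 2) ^ ν

noncomputable def besselJPrimeFirstZero (ν : ℝ) : ℝ :=
  sInf {x : ℝ | 0 < x ∧ deriv (besselJ ν) x = 0}

noncomputable def Sfun (z : ℝ) : ℝ := -Real.cot z - 2 * z / 3 + 1 / z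

/-!
Half-integer order makes `J_{3/2}` elementary: comparing power series, with
`Γ(n + 5/2) = (2n+3)‼ √π / 2^(n+2)`, gives
`J_{3/2}(x) = √(2/π) x^(-3/2) (sin x - x cos x)`.
So for `x > 0` the derivative vanishes exactly where `x² sin x = 3/2 (sin x - x cos x)`. Where
`sin x ≠ 0` this expression is `-(3/2) x sin x · S(x)`, and where `sin x = 0` neither side
vanishes, so the two zero sets coincide. The expression changes sign on `[π/2, 5π/6]`, which
puts a zero, hence the first one, below `5π/6`.
-/

open scoped Nat

theorem hasSum_sin_sub_mul_cos (x : ℝ) :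
    HasSum (fun n : ℕ => (-1) ^ n * x ^ (2 * n + 3) / (2 ^ n * n ! * (2 * n + 3)‼))
      (sin x - x * cos x) := by
  have h := (hasSum_nat_add_iff' 1).mpr <| (hasSum_sin x).sub ((hasSum_cos x).mul_left x)
  norm_num at h
  refine h.congr_fun fun n => ?_
  have hfac : (2 * n + 2)! = 2 ^ (n + 1) * (n + 1)! * (2 * n + 1)‼ := by
    rw [← Nat.doubleFactorial_two_mul]
    exact Nat.factorial_eq_mul_doubleFactorial (2 * n + 1)
  rw [show 2 * (n + 1) + 1 = 2 * n + 2 + 1 by ring, show 2 * (n + 1) = 2 * n + 2 by ring,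
    Nat.factorial_succ (2 * n + 2), hfac, Nat.doubleFactorial_add_two, Nat.factorial_succ]
  push_cast
  field_simp
  ring

theorem besselJ_three_halves {x : ℝ} (hx : 0 < x) :
    besselJ (3 / 2) x = √(2 / π) * x ^ (-(3 / 2) : ℝ) * (sin x - x * cos x) := by
  refine ((hasSum_sin_sub_mul_cos x).mul_left _ |>.congr_fun fun n => ?_).tsum_eq
  have hGamma : Gamma (3 / 2 + n + 1) = (2 * n + 3)‼ * √π / 2 ^ (n + 2) := by
    rw [show (3 / 2 + n + 1 : ℝ) = (n + 1 : ℕ) + 1 + 1 / 2 by push_cast; ring,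
      Gamma_nat_add_one_add_half]
    ring_nf
  have hpow : x ^ (-(3 / 2) : ℝ) = x ^ (3 / 2 : ℝ) / x ^ 3 := by
    rw [eq_div_iff (by positivity), ← rpow_natCast, ← rpow_add hx]
    norm_num
  have htwo : (2 : ℝ) ^ (3 / 2 : ℝ) = 2 * √2 := by
    rw [show (3 / 2 : ℝ) = 1 + 1 / 2 by norm_num, rpow_add two_pos, rpow_one, sqrt_eq_rpow]
  rw [hGamma, hpow, div_rpow hx.le zero_le_two, htwo, sqrt_div' _ pi_pos.le, div_pow]
  field_simp
  rw [sq_sqrt zero_le_two]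
  ring

theorem hasDerivAt_besselJ_three_halves {x : ℝ} (hx : 0 < x) :
    HasDerivAt (besselJ (3 / 2))
      (√(2 / π) * x ^ (-(5 / 2) : ℝ) * (x ^ 2 * sin x - 3 / 2 * (sin x - x * cos x))) x := by
  have hclosed : (fun y => √(2 / π) * y ^ (-(3 / 2) : ℝ) * (sin y - y * cos y)) =ᶠ[nhds x]
      besselJ (3 / 2) :=
    Filter.eventually_of_mem (Ioi_mem_nhds hx) fun y hy => (besselJ_three_halves hy).symm
  refine HasDerivAt.congr_of_eventuallyEq ?_ hclosed.symm
  have h : HasDerivAt (fun y => √(2 / π) * y ^ (-(3 / 2) : ℝ) * (sin y - y * cos y)) _ x :=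
    ((hasDerivAt_rpow_const (Or.inl hx.ne')).const_mul _).mul
      ((hasDerivAt_sin x).sub ((hasDerivAt_id' x).mul (hasDerivAt_cos x)))
  refine h.congr_deriv ?_
  have h52 : x ^ (-(3 / 2) : ℝ) = x * x ^ (-(5 / 2) : ℝ) := by
    rw [← rpow_one_add' hx.le (by norm_num)]
    norm_num
  rw [show (-(3 / 2) - 1 : ℝ) = -(5 / 2) by norm_num, h52]
  ring

theorem deriv_besselJ_three_halves_eq_zero_iff {x : ℝ} (hx : 0 < x) :
    deriv (besselJ (3 / 2)) x = 0 ↔ x ^ 2 * sin x - 3 / 2 * (sin x - x * cos x) = 0 := by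
  rw [(hasDerivAt_besselJ_three_halves hx).deriv, mul_eq_zero, or_iff_right]
  exact mul_ne_zero (sqrt_ne_zero'.mpr (by positivity)) (rpow_pos_of_pos hx _).ne'

theorem Sfun_eq_zero_iff {x : ℝ} (hx : 0 < x) :
    Sfun x = 0 ↔ x ^ 2 * sin x - 3 / 2 * (sin x - x * cos x) = 0 := by
  by_cases hsin : sin x = 0
  · have hcos : cos x ≠ 0 := by
      intro hcos
      simpa [hsin, hcos] using sin_sq_add_cos_sq x
    -- Here `cot x = cos x / 0 = 0`, so `Sfun x = 0` would force `x² = 3/2`, i.e. `0 < x < π`.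
    refine iff_of_false (fun hS => ?_) (by simp [hsin, hx.ne', hcos])
    have hx2 : x ^ 2 = 3 / 2 := by
      rw [Sfun, cot_eq_cos_div_sin, hsin, div_zero] at hS
      field_simp at hS
      linarith
    have hxpi : x < π := by nlinarith [pi_gt_three]
    exact (sin_pos_of_pos_of_lt_pi hx hxpi).ne' hsin
  · have hfactor :
        -(3 / 2 * x * sin x) * Sfun x = x ^ 2 * sin x - 3 / 2 * (sin x - x * cos x) := by
      rw [Sfun, cot_eq_cos_div_sin]
      field_simp
      ring
    rw [← hfactor, mul_eq_zero, or_iff_right]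
    simp [hx.ne', hsin]

theorem exists_deriv_numerator_eq_zero_mem_Ioo :
    ∃ c ∈ Set.Ioo (π / 2) (5 * π / 6), c ^ 2 * sin c - 3 / 2 * (sin c - c * cos c) = 0 := by
  have hcont : ContinuousOn (fun x => x ^ 2 * sin x - 3 / 2 * (sin x - x * cos x))
      (Set.Icc (π / 2) (5 * π / 6)) := by fun_prop
  have hleft :
      0 < (π / 2) ^ 2 * sin (π / 2) - 3 / 2 * (sin (π / 2) - π / 2 * cos (π / 2)) := by
    simp only [sin_pi_div_two, cos_pi_div_two]
    nlinarith [pi_gt_three]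
  have hright : (5 * π / 6) ^ 2 * sin (5 * π / 6)
      - 3 / 2 * (sin (5 * π / 6) - 5 * π / 6 * cos (5 * π / 6)) < 0 := by
    rw [show 5 * π / 6 = π - π / 6 by ring, sin_pi_sub, cos_pi_sub, sin_pi_div_six,
      cos_pi_div_six]
    have hsqrt3 : (1.73 : ℝ) < √3 := lt_sqrt_of_sq_lt (by norm_num)
    nlinarith [pi_gt_three, pi_lt_d2]
  exact intermediate_value_Ioo' (by linarith [pi_pos]) hcont ⟨hright, hleft⟩

theorem five_pi_div_six_lt_two_sqrt_two : 5 * π / 6 < 2 * √2 := by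
  have hsqrt2 : (1.414 : ℝ) < √2 := lt_sqrt_of_sq_lt (by norm_num)
  linarith [pi_lt_d2]

theorem besselJPrime_three_halves_first_zero :
    besselJPrimeFirstZero (3/2) = sInf {x : ℝ | 0 < x ∧ Sfun x = 0} ∧
      besselJPrimeFirstZero (3/2) < 5 * π / 6 ∧ 5 * π / 6 < 2 * Real.sqrt 2 := by
  have hzeros : {x : ℝ | 0 < x ∧ deriv (besselJ (3 / 2)) x = 0} = {x | 0 < x ∧ Sfun x = 0} :=
    Set.ext fun x => and_congr_right fun hx =>
      (deriv_besselJ_three_halves_eq_zero_iff hx).trans (Sfun_eq_zero_iff hx).symm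
  obtain ⟨c, hc, hzero⟩ := exists_deriv_numerator_eq_zero_mem_Ioo
  have hc_pos : 0 < c := lt_trans (by positivity) hc.1
  have hc_mem : c ∈ {x : ℝ | 0 < x ∧ deriv (besselJ (3 / 2)) x = 0} :=
    ⟨hc_pos, (deriv_besselJ_three_halves_eq_zero_iff hc_pos).mpr hzero⟩
  refine ⟨by rw [besselJPrimeFirstZero, hzeros], ?_, five_pi_div_six_lt_two_sqrt_two⟩
  calc besselJPrimeFirstZero (3 / 2) ≤ c := csInf_le ⟨0, fun y hy => hy.1.le⟩ hc_mem
    _ < 5 * π / 6 := hc.2
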